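/- Let L be an infinite compact Hausdorff space and let K = L × L with the product topology. Then the closed unit ball of C(K) contains a 2-equilateral set of cardinality w(K). -/

import Mathlib

open Cardinal

/-- The weight of a topological space: the minimal infinite cardinality of a
base for its topology. -/
noncomputable def weight (X : Type u) [TopologicalSpace X] : Cardinal.{u} :=
  ⨅ B : {B : Set (Set X) // TopologicalSpace.IsTopologicalBasis B}, max #B.1 ℵ₀

/-!
Call a family of pairs `(z_i, O_i)` with `z_i ∈ O_i` open *pairwise avoiding* if for `i ≠ j`
either `z_i ∉ O_j` or `z_j ∉ O_i`. Urysohn functions equal to `1` at `z_i` and `-1` off `O_i`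
then lie pairwise at distance `2` in the unit ball of `C(K)`. By Zorn's lemma there is a
pairwise avoiding family of rectangles `U × V` (`U`, `V` disjoint open subsets of `L`) covering
every point that some such rectangle covers, i.e. every off-diagonal point of `L × L`. The pairs
`(U, V)` occurring in it separate the points of `L`, so by compactness the finite intersections
of the sets `U` form a base of `L`, and there are infinitely many of them since `L` is infinite;
hence the family has at least `w(L × L)` members.
-/

open Set TopologicalSpace

universe v

section Weight

variable {X : Type u} {Y : Type u} [TopologicalSpace X] [TopologicalSpace Y]

theorem weight_le_of_isTopologicalBasis {B : Set (Set X)} (hB : IsTopologicalBasis B) :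
    weight X ≤ max #B ℵ₀ :=
  ciInf_le' (fun B : {B : Set (Set X) // IsTopologicalBasis B} => max #B.1 ℵ₀) ⟨B, hB⟩

theorem weight_prod_le_of_isTopologicalBasis {B : Set (Set X)} {C : Set (Set Y)}
    (hB : IsTopologicalBasis B) (hC : IsTopologicalBasis C) :
    weight (X × Y) ≤ max (max #B #C) ℵ₀ :=
  (weight_le_of_isTopologicalBasis (hB.prod hC)).trans <|
    max_le ((mk_image2_le.trans (mul_le_max _ _))) (le_max_right _ _)

end Weight

theorem Cardinal.mk_finset_le_max (α : Type u) : #(Finset α) ≤ max ℵ₀ #α := by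
  classical
  exact (mk_le_of_surjective List.toFinset_surjective).trans (mk_list_le_max α)

structure DisjointOpenPair (X : Type u) [TopologicalSpace X] where
  fst : Set X
  snd : Set X
  isOpen_fst : IsOpen fst
  isOpen_snd : IsOpen snd
  disjoint : Disjoint fst snd

namespace DisjointOpenPair

variable {X : Type u} [TopologicalSpace X]

def SeparatesPoints (P : Set (DisjointOpenPair X)) : Prop :=
  ∀ x y : X, x ≠ y → ∃ p ∈ P, x ∈ p.fst ∧ y ∈ p.snd

theorem separatesPoints_univ [T2Space X] : SeparatesPoints (univ : Set (DisjointOpenPair X)) :=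
  fun _ _ hxy =>
    let ⟨U, V, hU, hV, hx, hy, hUV⟩ := t2_separation hxy
    ⟨⟨U, V, hU, hV, hUV⟩, mem_univ _, hx, hy⟩

theorem SeparatesPoints.infinite [Infinite X] {P : Set (DisjointOpenPair X)}
    (hP : SeparatesPoints P) : P.Infinite := by
  intro hfin
  have : Finite P := hfin.to_subtype
  have hinj : Function.Injective fun x : X => {p : P | x ∈ p.1.fst} := by
    intro x y hxy
    by_contra hne
    obtain ⟨p, hp, hx, hy⟩ := hP x y hne
    have hy' : y ∈ p.fst := (Set.ext_iff.mp hxy ⟨p, hp⟩).mp hx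
    exact disjoint_left.mp p.disjoint hy' hy
  have : Finite X := Finite.of_injective _ hinj
  exact not_finite X

/-- Given `x ∈ O`, cover the compact set `Oᶜ` by the sets `p.snd` with `x ∈ p.fst`; the
intersection of the corresponding finitely many `p.fst` contains `x` and misses `Oᶜ`. -/
theorem SeparatesPoints.isTopologicalBasis [CompactSpace X] {P : Set (DisjointOpenPair X)}
    (hP : SeparatesPoints P) :
    IsTopologicalBasis (range fun G : Finset P => ⋂ p ∈ G, (p : DisjointOpenPair X).fst) := by
  refine isTopologicalBasis_of_isOpen_of_nhds ?_ fun x O hxO hO => ?_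
  · rintro _ ⟨G, rfl⟩
    exact isOpen_biInter_finset fun p _ => p.1.isOpen_fst
  have hcover : Oᶜ ⊆ ⋃ p ∈ {p : P | x ∈ p.1.fst}, p.1.snd := fun y hy =>
    let ⟨p, hp, hx, hy⟩ := hP x y (ne_of_mem_of_not_mem hxO hy)
    mem_biUnion (x := ⟨p, hp⟩) hx hy
  obtain ⟨G, hGx, hG, hGcover⟩ := hO.isClosed_compl.isCompact.elim_finite_subcover_image
    (fun p _ => p.1.isOpen_snd) hcover
  refine ⟨_, ⟨hG.toFinset, rfl⟩, ?_, fun y hy => ?_⟩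
  · simp only [Finite.mem_toFinset, mem_iInter]
    exact fun p hp => hGx hp
  · by_contra hyO
    obtain ⟨p, hp, hyp⟩ := mem_iUnion₂.mp (hGcover hyO)
    have hyp' : y ∈ p.1.fst := mem_iInter₂.mp hy p (hG.mem_toFinset.mpr hp)
    exact disjoint_left.mp p.1.disjoint hyp' hyp

theorem SeparatesPoints.weight_prod_self_le [CompactSpace X] {P : Set (DisjointOpenPair X)}
    (hP : SeparatesPoints P) : weight (X × X) ≤ max #P ℵ₀ := by
  have hB := hP.isTopologicalBasis
  have hcard : #(range fun G : Finset P => ⋂ p ∈ G, (p : DisjointOpenPair X).fst) ≤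
      max #P ℵ₀ :=
    mk_range_le.trans ((mk_finset_le_max P).trans_eq (max_comm _ _))
  refine (weight_prod_le_of_isTopologicalBasis hB hB).trans ?_
  rw [max_self]
  exact max_le hcard (le_max_right _ _)

end DisjointOpenPair

theorem exists_pairwise_avoiding_marks_covering {X : Type u} {β : Type v} (R : β → Set X) :
    ∃ T : Set (X × β), (∀ m ∈ T, m.1 ∈ R m.2) ∧
      T.Pairwise (fun m m' => m.1 ∉ R m'.2 ∨ m'.1 ∉ R m.2) ∧
      ∀ b, ∀ x ∈ R b, ∃ m ∈ T, x ∈ R m.2 := by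
  set r : X × β → X × β → Prop := fun m m' => m.1 ∉ R m'.2 ∨ m'.1 ∉ R m.2
  obtain ⟨T, ⟨hmem, hpair⟩, hmax⟩ := zorn_subset {T | (∀ m ∈ T, m.1 ∈ R m.2) ∧ T.Pairwise r}
    fun c hc hchain => ⟨⋃₀ c,
      ⟨fun m ⟨s, hs, hm⟩ => (hc hs).1 m hm, hchain.pairwise_sUnion.mpr fun s hs => (hc hs).2⟩,
      fun _ => subset_sUnion_of_mem⟩
  refine ⟨T, hmem, hpair, fun b x hx => ?_⟩
  by_contra! hT
  have hins : insert (x, b) T ⊆ T := hmax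
    ⟨forall_mem_insert.mpr ⟨hx, hmem⟩,
      pairwise_insert.mpr ⟨hpair, fun m hm _ => ⟨Or.inl (hT m hm), Or.inr (hT m hm)⟩⟩⟩
    (subset_insert _ _)
  exact hT _ (hins (mem_insert _ _)) hx

section Equilateral

variable {K : Type u} [TopologicalSpace K] [CompactSpace K]

theorem exists_norm_le_one_eq_one_eqOn_neg_one [CompletelyRegularSpace K] {z : K} {O : Set K}
    (hO : IsOpen O) (hz : z ∈ O) :
    ∃ f : C(K, ℝ), ‖f‖ ≤ 1 ∧ f z = 1 ∧ EqOn f (-1) Oᶜ := by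
  obtain ⟨g, hg, hgz, hgO⟩ := CompletelyRegularSpace.completely_regular_isOpen z O hO hz
  refine ⟨⟨fun w => 1 - 2 * (g w : ℝ), by fun_prop⟩, ?_, by simp [hgz], fun w hw => ?_⟩
  · refine (ContinuousMap.norm_le _ zero_le_one).mpr fun w => ?_
    rw [ContinuousMap.coe_mk, Real.norm_eq_abs, abs_le]
    constructor <;> linarith [unitInterval.nonneg (g w), unitInterval.le_one (g w)]
  · norm_num [hgO hw]

theorem norm_sub_eq_two_of_eq_one_of_eq_neg_one {f g : C(K, ℝ)} (hf : ‖f‖ ≤ 1) (hg : ‖g‖ ≤ 1)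
    {z : K} (hfz : f z = 1) (hgz : g z = -1) : ‖f - g‖ = 2 := by
  refine le_antisymm ((norm_sub_le f g).trans (by linarith)) ?_
  calc (2 : ℝ) = ‖(f - g) z‖ := by norm_num [hfz, hgz]
    _ ≤ ‖f - g‖ := (f - g).norm_coe_le_norm z

theorem exists_equilateral_of_pairwise_avoiding [CompletelyRegularSpace K] {ι : Type u}
    (z : ι → K) (O : ι → Set K) (hO : ∀ i, IsOpen (O i)) (hz : ∀ i, z i ∈ O i)
    (hpair : Pairwise fun i j => z i ∉ O j ∨ z j ∉ O i) :
    ∃ A : Set C(K, ℝ), A ⊆ Metric.closedBall 0 1 ∧ #A = #ι ∧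
      ∀ f ∈ A, ∀ g ∈ A, f ≠ g → ‖f - g‖ = 2 := by
  choose F hF1 hFz hFO using fun i => exists_norm_le_one_eq_one_eqOn_neg_one (hO i) (hz i)
  have hdist : Pairwise fun i j => ‖F i - F j‖ = 2 := by
    intro i j hij
    rcases hpair hij with h | h
    · exact norm_sub_eq_two_of_eq_one_of_eq_neg_one (hF1 i) (hF1 j) (hFz i) (hFO j h)
    · rw [norm_sub_rev]
      exact norm_sub_eq_two_of_eq_one_of_eq_neg_one (hF1 j) (hF1 i) (hFz j) (hFO i h)
  have hinj : Function.Injective F := fun i j hFij => by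
    by_contra hij
    simpa [hFij] using hdist hij
  refine ⟨range F, range_subset_iff.mpr fun i => mem_closedBall_zero_iff.mpr (hF1 i),
    mk_range_eq F hinj, ?_⟩
  rintro _ ⟨i, rfl⟩ _ ⟨j, rfl⟩ hij
  exact hdist fun h => hij (congrArg F h)

end Equilateral

/-- For `K = L × L` with `L` an infinite compact Hausdorff space, the closed unit ball of
`C(K)` contains a `2`-equilateral set of cardinality `w(K)`. -/
theorem statement15 (L : Type u) [TopologicalSpace L] [CompactSpace L] [T2Space L] [Infinite L] :
    ∃ A : Set C(L × L, ℝ), A ⊆ Metric.closedBall 0 1 ∧ #A = weight (L × L) ∧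
      ∀ f ∈ A, ∀ g ∈ A, f ≠ g → ‖f - g‖ = 2 := by
  obtain ⟨T, hmem, hpair, hcover⟩ :=
    exists_pairwise_avoiding_marks_covering fun p : DisjointOpenPair L => p.fst ×ˢ p.snd
  have hsep : DisjointOpenPair.SeparatesPoints (Prod.snd '' T) := fun x y hxy => by
    obtain ⟨p, -, hx, hy⟩ := DisjointOpenPair.separatesPoints_univ x y hxy
    obtain ⟨m, hm, hxym⟩ := hcover p (x, y) ⟨hx, hy⟩
    exact ⟨m.2, mem_image_of_mem _ hm, hxym⟩
  have hT : ℵ₀ ≤ #T := aleph0_le_mk_iff.mpr (hsep.infinite.of_image _).to_subtype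
  have hweight : weight (L × L) ≤ #T :=
    hsep.weight_prod_self_le.trans (max_le mk_image_le hT)
  obtain ⟨S, hST, hS⟩ := le_mk_iff_exists_subset.mp hweight
  obtain ⟨A, hA, hAcard, hAeq⟩ := exists_equilateral_of_pairwise_avoiding
    (fun m : S => m.1.1) (fun m => m.1.2.fst ×ˢ m.1.2.snd)
    (fun m => m.1.2.isOpen_fst.prod m.1.2.isOpen_snd) (fun m => hmem _ (hST m.2))
    fun m m' hne => hpair (hST m.2) (hST m'.2) (Subtype.coe_ne_coe.mpr hne)
  exact ⟨A, hA, hAcard.trans hS, hAeq⟩
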